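/- (Cantor–Schröder–Bernstein for first-level Borel isomorphism) If there are injective Δ⁰₂-maps f: X → Y and g: Y → X between Polish spaces X and Y, then there is a bijection h: ω × X → ω × Y such that both h and h⁻¹ map Δ⁰₂ sets to Δ⁰₂ sets (i.e., h is a first-level Borel isomorphism). -/
import Mathlib


/-- A set is F_sigma if it is a countable union of closed sets. -/
def IsFsigma {X : Type*} [TopologicalSpace X] (s : Set X) : Prop :=
  ∃ F : ℕ → Set X, (∀ n, IsClosed (F n)) ∧ s = ⋃ n, F n

/-- A Δ⁰₂ set is one that is both F_sigma and G_delta. -/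
def IsDelta02 {X : Type*} [TopologicalSpace X] (s : Set X) : Prop :=
  IsFsigma s ∧ IsGδ s

section Aux

open Set Function

variable {α : Type*} [TopologicalSpace α] {β : Type*} [TopologicalSpace β] {s t : Set α}

lemma IsClosed.isFsigma' (h : IsClosed s) : IsFsigma s :=
  ⟨fun _ => s, fun _ => h, (Set.iUnion_const s).symm⟩

lemma isFsigma_empty : IsFsigma (∅ : Set α) := isClosed_empty.isFsigma'

lemma isDelta02_empty : IsDelta02 (∅ : Set α) := ⟨isFsigma_empty, IsGδ.empty⟩

lemma isFsigma_iUnion {ι : Type*} [Countable ι] {s : ι → Set α}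
    (h : ∀ i, IsFsigma (s i)) : IsFsigma (⋃ i, s i) := by
  rcases isEmpty_or_nonempty ι with hι | hι
  · simpa using isFsigma_empty
  choose F hFc hFs using h
  obtain ⟨e, he⟩ := exists_surjective_nat (ι × ℕ)
  refine ⟨fun n => F (e n).1 (e n).2, fun n => hFc _ _, ?_⟩
  have : (⋃ i, s i) = ⋃ p : ι × ℕ, F p.1 p.2 := by
    ext x; simp only [mem_iUnion, Prod.exists]
    constructor
    · rintro ⟨i, hi⟩; rw [hFs i] at hi
      obtain ⟨n, hn⟩ := mem_iUnion.1 hi; exact ⟨i, n, hn⟩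
    · rintro ⟨i, n, hn⟩; exact ⟨i, by rw [hFs i]; exact mem_iUnion.2 ⟨n, hn⟩⟩
  rw [this, ← he.iUnion_comp (fun p => F p.1 p.2)]

lemma isGδ_compl_of_isFsigma (h : IsFsigma s) : IsGδ sᶜ := by
  obtain ⟨F, hFc, rfl⟩ := h
  rw [Set.compl_iUnion]
  exact IsGδ.iInter_of_isOpen fun n => (hFc n).isOpen_compl

lemma isFsigma_compl_of_isGδ (h : IsGδ s) : IsFsigma sᶜ := by
  obtain ⟨U, hUo, rfl⟩ := h.eq_iInter_nat
  rw [Set.compl_iInter]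
  exact ⟨fun n => (U n)ᶜ, fun n => (hUo n).isClosed_compl, rfl⟩

lemma IsDelta02.compl (h : IsDelta02 s) : IsDelta02 sᶜ :=
  ⟨isFsigma_compl_of_isGδ h.2, isGδ_compl_of_isFsigma h.1⟩

lemma IsFsigma.union (hs : IsFsigma s) (ht : IsFsigma t) : IsFsigma (s ∪ t) := by
  obtain ⟨F, hFc, rfl⟩ := hs; obtain ⟨G, hGc, rfl⟩ := ht
  exact ⟨fun n => F n ∪ G n, fun n => (hFc n).union (hGc n), by
    rw [Set.iUnion_union_distrib]⟩

lemma IsDelta02.union (hs : IsDelta02 s) (ht : IsDelta02 t) : IsDelta02 (s ∪ t) :=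
  ⟨hs.1.union ht.1, hs.2.union ht.2⟩

lemma IsDelta02.inter (hs : IsDelta02 s) (ht : IsDelta02 t) : IsDelta02 (s ∩ t) := by
  have : s ∩ t = (sᶜ ∪ tᶜ)ᶜ := by rw [Set.compl_union, compl_compl, compl_compl]
  rw [this]
  exact (hs.compl.union ht.compl).compl

lemma IsDelta02.preimage {f : β → α} (hf : Continuous f) (h : IsDelta02 s) :
    IsDelta02 (f ⁻¹' s) := by
  constructor
  · obtain ⟨F, hFc, rfl⟩ := h.1
    exact ⟨fun n => f ⁻¹' F n, fun n => (hFc n).preimage hf, by rw [Set.preimage_iUnion]⟩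
  · obtain ⟨U, hUo, rfl⟩ := h.2.eq_iInter_nat
    rw [Set.preimage_iInter]
    exact IsGδ.iInter_of_isOpen fun n => (hUo n).preimage hf

lemma mem_sliceUnion {S : ℕ → Set α} {n : ℕ} {x : α} :
    ((n, x) ∈ ⋃ m, ({m} : Set ℕ) ×ˢ S m) ↔ x ∈ S n := by
  simp only [Set.mem_iUnion, Set.mem_prod, Set.mem_singleton_iff]
  constructor
  · rintro ⟨m, rfl, hx⟩; exact hx
  · exact fun hx => ⟨n, rfl, hx⟩

lemma isDelta02_sliceUnion {S : ℕ → Set α} (h : ∀ n, IsDelta02 (S n)) :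
    IsDelta02 (⋃ n, ({n} : Set ℕ) ×ˢ S n) := by
  constructor
  · refine isFsigma_iUnion fun n => ?_
    obtain ⟨F, hFc, hFs⟩ := (h n).1
    rw [hFs, Set.prod_iUnion]
    exact isFsigma_iUnion fun k => ((isClosed_discrete _).prod (hFc k)).isFsigma'
  · choose U hUo hUs using fun n => (h n).2.eq_iInter_nat
    have key : (⋃ n, ({n} : Set ℕ) ×ˢ S n) = ⋂ k, ⋃ n, ({n} : Set ℕ) ×ˢ U n k := by
      ext ⟨n, x⟩
      rw [mem_sliceUnion, Set.mem_iInter]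
      simp only [mem_sliceUnion]
      rw [hUs n, Set.mem_iInter]
    rw [key]
    exact IsGδ.iInter_of_isOpen fun k =>
      isOpen_iUnion fun n => (isOpen_discrete _).prod (hUo n k)

/-- The increasing sequence of sets in the Cantor–Schröder–Bernstein construction:
`XS 0 = ∅`, `XS (n+1) = g '' (f '' (XS n)ᶜ)ᶜ`. -/
def csbXS {X Y : Type*} (f : X → Y) (g : Y → X) : ℕ → Set X
  | 0 => ∅
  | n + 1 => g '' (f '' (csbXS f g n)ᶜ)ᶜ

end Aux

/-- Cantor–Schröder–Bernstein for first-level Borel isomorphism. -/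
theorem stmt1 {X Y : Type*} [TopologicalSpace X] [PolishSpace X]
    [TopologicalSpace Y] [PolishSpace Y]
    (f : X → Y) (g : Y → X)
    (hfinj : Function.Injective f) (hginj : Function.Injective g)
    (hfpre : ∀ A : Set Y, IsDelta02 A → IsDelta02 (f ⁻¹' A))
    (hfimg : ∀ B : Set X, IsDelta02 B → IsDelta02 (f '' B))
    (hgpre : ∀ B : Set X, IsDelta02 B → IsDelta02 (g ⁻¹' B))
    (hgimg : ∀ A : Set Y, IsDelta02 A → IsDelta02 (g '' A)) :
    ∃ h : ℕ × X → ℕ × Y, Function.Bijective h ∧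
      (∀ A : Set (ℕ × X), IsDelta02 A → IsDelta02 (h '' A)) ∧
      (∀ B : Set (ℕ × Y), IsDelta02 B → IsDelta02 (h ⁻¹' B)) := by
  classical
  rcases isEmpty_or_nonempty X with hX | hX
  · have hY : IsEmpty Y := Function.isEmpty g
    have hXY : IsEmpty (ℕ × X) := by infer_instance
    have hYY : IsEmpty (ℕ × Y) := by infer_instance
    set h0 : ℕ × X → ℕ × Y := fun p => hXY.elim p with h0def
    refine ⟨h0, ⟨fun p => hXY.elim p, fun q => hYY.elim q⟩, ?_, ?_⟩
    · intro A _
      have : h0 '' A = ∅ := by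
        rw [Set.eq_empty_of_isEmpty A, Set.image_empty]
      rw [this]; exact isDelta02_empty
    · intro B _
      rw [Set.eq_empty_of_isEmpty (h0 ⁻¹' B)]
      exact isDelta02_empty
  have hYne : Nonempty Y := ⟨f (Classical.arbitrary X)⟩
  set XS : ℕ → Set X := csbXS f g with hXSdef
  have hXS0 : XS 0 = ∅ := rfl
  have hXSsucc : ∀ n, XS (n + 1) = g '' (f '' (XS n)ᶜ)ᶜ := fun n => rfl
  have hXSd : ∀ n, IsDelta02 (XS n) := by
    intro n
    induction n with
    | zero => rw [hXS0]; exact isDelta02_empty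
    | succ n ih =>
      rw [hXSsucc]
      exact hgimg _ ((hfimg _ ih.compl).compl)
  -- the map and its inverse
  set h : ℕ × X → ℕ × Y := fun p =>
    if p.2 ∈ XS p.1 then (p.1 - 1, Function.invFun g p.2) else (p.1, f p.2) with hdef
  set h' : ℕ × Y → ℕ × X := fun q =>
    if q.2 ∈ f '' (XS q.1)ᶜ then (q.1, Function.invFun f q.2) else (q.1 + 1, g q.2) with h'def
  have hgl : ∀ y, Function.invFun g (g y) = y := Function.leftInverse_invFun hginj
  have hfl : ∀ x, Function.invFun f (f x) = x := Function.leftInverse_invFun hfinj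
  have hleft : Function.LeftInverse h' h := by
    rintro ⟨n, x⟩
    by_cases hx : x ∈ XS n
    · obtain ⟨k, rfl⟩ : ∃ k, n = k + 1 := by
        cases n with
        | zero => rw [hXS0] at hx; exact absurd hx (Set.notMem_empty x)
        | succ k => exact ⟨k, rfl⟩
      rw [hXSsucc] at hx
      obtain ⟨y, hy, rfl⟩ := hx
      have h1 : h (k + 1, g y) = (k, y) := by
        simp only [hdef, if_pos (by rw [hXSsucc]; exact ⟨y, hy, rfl⟩ :
          g y ∈ XS (k + 1))]
        simp [hgl y]
      rw [h1]
      simp only [h'def]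
      rw [if_neg hy]
    · have h1 : h (n, x) = (n, f x) := by simp only [hdef, if_neg hx]
      rw [h1]
      simp only [h'def]
      rw [if_pos (Set.mem_image_of_mem f hx)]
      simp [hfl x]
  have hright : Function.RightInverse h' h := by
    rintro ⟨m, y⟩
    by_cases hy : y ∈ f '' (XS m)ᶜ
    · obtain ⟨x, hx, rfl⟩ := hy
      have h1 : h' (m, f x) = (m, x) := by
        simp only [h'def]
        rw [if_pos (Set.mem_image_of_mem f hx)]
        simp [hfl x]
      rw [h1]
      simp only [hdef, if_neg hx]
    · have h1 : h' (m, y) = (m + 1, g y) := by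
        simp only [h'def]; rw [if_neg hy]
      rw [h1]
      have hgy : g y ∈ XS (m + 1) := by rw [hXSsucc]; exact ⟨y, hy, rfl⟩
      simp only [hdef, if_pos hgy]
      simp [hgl y]
  have hbij : Function.Bijective h :=
    Function.bijective_iff_has_inverse.2 ⟨h', hleft, hright⟩
  -- slices are Δ⁰₂
  have hsliceX : ∀ (A : Set (ℕ × X)) (n : ℕ), IsDelta02 A →
      IsDelta02 {x : X | (n, x) ∈ A} := by
    intro A n hA
    exact hA.preimage (Continuous.prodMk_right n)
  have hsliceY : ∀ (B : Set (ℕ × Y)) (n : ℕ), IsDelta02 B →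
      IsDelta02 {y : Y | (n, y) ∈ B} := by
    intro B n hB
    exact hB.preimage (Continuous.prodMk_right n)
  refine ⟨h, hbij, ?_, ?_⟩
  · -- image
    intro A hA
    have himg : h '' A = ⋃ m, ({m} : Set ℕ) ×ˢ
        ((g ⁻¹' ({x : X | (m + 1, x) ∈ A} ∩ XS (m + 1))) ∪
          f '' ({x : X | (m, x) ∈ A} ∩ (XS m)ᶜ)) := by
      ext ⟨m, y⟩
      rw [mem_sliceUnion]
      constructor
      · rintro ⟨⟨n, x⟩, hxA, heq⟩
        by_cases hx : x ∈ XS n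
        · obtain ⟨k, rfl⟩ : ∃ k, n = k + 1 := by
            cases n with
            | zero => rw [hXS0] at hx; exact absurd hx (Set.notMem_empty x)
            | succ k => exact ⟨k, rfl⟩
          have hxk := hx
          rw [hXSsucc] at hxk
          obtain ⟨y', hy', rfl⟩ := hxk
          simp only [hdef, if_pos hx] at heq
          simp only [Nat.add_sub_cancel, hgl y'] at heq
          obtain ⟨rfl, rfl⟩ := Prod.mk.injEq .. ▸ heq
          exact Or.inl ⟨hxA, hx⟩
        · simp only [hdef, if_neg hx] at heq
          obtain ⟨rfl, rfl⟩ := Prod.mk.injEq .. ▸ heq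
          exact Or.inr ⟨x, ⟨hxA, hx⟩, rfl⟩
      · rintro (⟨hgA, hgX⟩ | ⟨x, ⟨hxA, hx⟩, rfl⟩)
        · refine ⟨(m + 1, g y), hgA, ?_⟩
          simp only [hdef, if_pos hgX]
          simp [hgl y]
        · exact ⟨(m, x), hxA, by simp only [hdef, if_neg hx]⟩
    rw [himg]
    refine isDelta02_sliceUnion fun m => IsDelta02.union ?_ ?_
    · exact hgpre _ ((hsliceX A (m + 1) hA).inter (hXSd (m + 1)))
    · exact hfimg _ ((hsliceX A m hA).inter (hXSd m).compl)
  · -- preimage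
    intro B hB
    have hpre : h ⁻¹' B = ⋃ n, ({n} : Set ℕ) ×ˢ
        ((g '' {y : Y | (n - 1, y) ∈ B} ∩ XS n) ∪
          (f ⁻¹' {y : Y | (n, y) ∈ B} ∩ (XS n)ᶜ)) := by
      ext ⟨n, x⟩
      rw [Set.mem_preimage, mem_sliceUnion]
      by_cases hx : x ∈ XS n
      · simp only [hdef, if_pos hx]
        constructor
        · intro hmem
          obtain ⟨k, rfl⟩ : ∃ k, n = k + 1 := by
            cases n with
            | zero => rw [hXS0] at hx; exact absurd hx (Set.notMem_empty x)
            | succ k => exact ⟨k, rfl⟩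
          have hxk := hx
          rw [hXSsucc] at hxk
          obtain ⟨y', _, rfl⟩ := hxk
          rw [hgl y'] at hmem
          exact Or.inl ⟨⟨y', hmem, rfl⟩, hx⟩
        · rintro (⟨⟨y', hy', rfl⟩, _⟩ | ⟨_, hnx⟩)
          · rwa [hgl y']
          · exact absurd hx hnx
      · simp only [hdef, if_neg hx]
        constructor
        · intro hmem
          exact Or.inr ⟨hmem, hx⟩
        · rintro (⟨_, hX⟩ | ⟨hmem, _⟩)
          · exact absurd hX hx
          · exact hmem
    rw [hpre]
    refine isDelta02_sliceUnion fun n => IsDelta02.union ?_ ?_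
    · exact (hgimg _ (hsliceY B (n - 1) hB)).inter (hXSd n)
    · exact (hfpre _ (hsliceY B n hB)).inter (hXSd n).compl
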